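/- arXiv:2202.12931 — 5 statements merged into one kernel-verified Lean document; each statement's English description precedes it below -/
import Mathlib

section
/- Let B be a real Banach space and ξ : ℕ → B a Schauder basis of B, with coefficient functionals cᵢ. Then for every i ∈ ℕ, the coefficient map x ↦ cᵢ(x) is a continuous (bounded) linear functional on B. -/
/-!
The convergent sequences of partial sums `∑_{i<n} aᵢ ξᵢ` form a Banach space under the sup norm,
and taking the limit maps it continuously and, by existence and uniqueness of expansions,
bijectively onto `B`. By the open mapping theorem the inverse `x ↦ (∑_{i<n} cᵢ(x) ξᵢ)ₙ` is
bounded, hence so is `x ↦ cᵢ(x) ξᵢ`, the difference of two consecutive terms, and therefore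
`x ↦ cᵢ(x)` since `ξᵢ ≠ 0`.
-/

open Filter Topology OnePoint

namespace OnePoint

theorem tendsto_apply_natCast_infty {Y : Type*} [TopologicalSpace Y] (f : C(OnePoint ℕ, Y)) :
    Tendsto (fun n : ℕ => f n) atTop (𝓝 (f ∞)) :=
  (continuous_iff_from_nat f).1 f.continuous

end OnePoint

section

variable {𝕜 E : Type*} [NontriviallyNormedField 𝕜] [NormedAddCommGroup E] [NormedSpace 𝕜 E]

variable (𝕜) in
def incrementCLM (n : ℕ) : C(OnePoint ℕ, E) →L[𝕜] E :=
  ContinuousMap.evalCLM 𝕜 ((n + 1 : ℕ) : OnePoint ℕ) - ContinuousMap.evalCLM 𝕜 (n : OnePoint ℕ)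

variable (𝕜) in
/-- A convergent sequence is encoded as a continuous function on `ℕ ∪ {∞}`, its limit being the
value at `∞`; the sup norm of `C(OnePoint ℕ, E)` is then the sup norm of the sequence. -/
def partialSumSpace (ξ : ℕ → E) : Submodule 𝕜 C(OnePoint ℕ, E) :=
  (ContinuousMap.evalCLM 𝕜 ((0 : ℕ) : OnePoint ℕ)).toLinearMap.ker ⊓
    ⨅ n, (𝕜 ∙ ξ n).comap (incrementCLM 𝕜 n).toLinearMap

theorem mem_partialSumSpace {ξ : ℕ → E} {f : C(OnePoint ℕ, E)} :
    f ∈ partialSumSpace 𝕜 ξ ↔ f (0 : ℕ) = 0 ∧ ∀ n : ℕ, f (n + 1 : ℕ) - f n ∈ 𝕜 ∙ ξ n := by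
  simp [partialSumSpace, incrementCLM]

theorem isClosed_partialSumSpace [CompleteSpace 𝕜] (ξ : ℕ → E) :
    IsClosed (partialSumSpace 𝕜 ξ : Set C(OnePoint ℕ, E)) := by
  simp only [partialSumSpace, Submodule.coe_inf, Submodule.coe_iInf, Submodule.comap_coe,
    ContinuousLinearMap.coe_coe]
  exact (ContinuousLinearMap.isClosed_ker _).inter <| isClosed_iInter fun n =>
    (Submodule.closed_of_finiteDimensional _).preimage (incrementCLM 𝕜 n).continuous

theorem exists_coeff_of_mem_partialSumSpace {ξ : ℕ → E} {f : C(OnePoint ℕ, E)}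
    (hf : f ∈ partialSumSpace 𝕜 ξ) :
    ∃ d : ℕ → 𝕜, ∀ n : ℕ, f n = ∑ i ∈ Finset.range n, d i • ξ i := by
  obtain ⟨hf0, hinc⟩ := mem_partialSumSpace.1 hf
  choose d hd using fun n => Submodule.mem_span_singleton.1 (hinc n)
  refine ⟨d, fun n => ?_⟩
  induction n with
  | zero => simpa using hf0
  | succ n ih => rw [Finset.sum_range_succ, ← ih, hd n, add_sub_cancel]

variable (𝕜) in
def limitCLM (ξ : ℕ → E) : partialSumSpace 𝕜 ξ →L[𝕜] E :=
  (ContinuousMap.evalCLM 𝕜 ∞).comp (partialSumSpace 𝕜 ξ).subtypeL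

noncomputable def incrementCoord {ξ : ℕ → E} {i : ℕ} (hξ : ξ i ≠ 0) :
    partialSumSpace 𝕜 ξ →L[𝕜] 𝕜 :=
  ContinuousLinearEquiv.coord 𝕜 (ξ i) hξ ∘L
    ((incrementCLM 𝕜 i).comp (partialSumSpace 𝕜 ξ).subtypeL).codRestrict _
      fun f => (mem_partialSumSpace.1 f.2).2 i

section SchauderBasis

variable {ξ : ℕ → E} {c : E → ℕ → 𝕜}
  (huniq : ∀ (x : E) (d : ℕ → 𝕜),
    Tendsto (fun n => ∑ i ∈ Finset.range n, d i • ξ i) atTop (𝓝 x) → d = c x)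
include huniq

theorem ne_zero_of_coeff_unique (i : ℕ) : ξ i ≠ 0 := by
  intro hi
  have hsingle : ∀ n, ∑ j ∈ Finset.range n, (Pi.single i 1 : ℕ → 𝕜) j • ξ j = 0 := fun n =>
    Finset.sum_eq_zero fun j _ => by by_cases hj : j = i <;> simp [hj, hi]
  have h1 := huniq 0 (Pi.single i 1) (by simpa only [hsingle] using tendsto_const_nhds)
  have h0 := huniq 0 0 (by simp)
  simpa using congrFun (h1.trans h0.symm) i

theorem apply_natCast_eq_partialSum {f : C(OnePoint ℕ, E)} (hf : f ∈ partialSumSpace 𝕜 ξ)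
    (n : ℕ) :
    f n = ∑ i ∈ Finset.range n, c (f ∞) i • ξ i := by
  obtain ⟨d, hd⟩ := exists_coeff_of_mem_partialSumSpace hf
  have hlim := tendsto_apply_natCast_infty f
  simp only [hd] at hlim
  rw [hd, huniq _ d hlim]

theorem incrementCoord_apply {i : ℕ} (hξ : ξ i ≠ 0) (f : partialSumSpace 𝕜 ξ) :
    incrementCoord hξ f = c (limitCLM 𝕜 ξ f) i := by
  have : ((incrementCLM 𝕜 i).comp (partialSumSpace 𝕜 ξ).subtypeL).codRestrict _
      (fun f => (mem_partialSumSpace.1 f.2).2 i) f =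
      ContinuousLinearEquiv.toSpanNonzeroSingleton 𝕜 (ξ i) hξ (c (limitCLM 𝕜 ξ f) i) := by
    ext
    simp [incrementCLM, apply_natCast_eq_partialSum huniq f.2, Finset.sum_range_succ, limitCLM]
  rw [incrementCoord, ContinuousLinearMap.comp_apply, this,
    ContinuousLinearEquiv.coord_toSpanNonzeroSingleton]

theorem limitCLM_bijective
    (hconv : ∀ x : E, Tendsto (fun n => ∑ i ∈ Finset.range n, c x i • ξ i) atTop (𝓝 x)) :
    Function.Bijective (limitCLM 𝕜 ξ) := by
  refine ⟨fun f g hfg => ?_, fun x => ?_⟩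
  · ext z
    induction z using OnePoint.rec with
    | infty => exact hfg
    | coe n =>
      rw [apply_natCast_eq_partialSum huniq f.2, apply_natCast_eq_partialSum huniq g.2]
      exact congrArg (fun y => ∑ i ∈ Finset.range n, c y i • ξ i) hfg
  · let f := continuousMapMkNat (fun n => ∑ i ∈ Finset.range n, c x i • ξ i) x (hconv x)
    have hf_apply : ∀ n : ℕ, f n = ∑ i ∈ Finset.range n, c x i • ξ i := fun n => rfl
    have hf : f ∈ partialSumSpace 𝕜 ξ := mem_partialSumSpace.2
      ⟨by rw [hf_apply, Finset.sum_range_zero], fun n => Submodule.mem_span_singleton.2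
        ⟨c x n, by rw [hf_apply, hf_apply, Finset.sum_range_succ, add_sub_cancel_left]⟩⟩
    exact ⟨⟨f, hf⟩, rfl⟩

end SchauderBasis

end

/-- If `ξ` is a Schauder basis of a real Banach space `B` with coefficient
functionals `c`, then each coefficient map `x ↦ c x i` is a continuous linear functional. -/
theorem schauder_coeff_continuous
    {B : Type*} [NormedAddCommGroup B] [NormedSpace ℝ B] [CompleteSpace B]
    (ξ : ℕ → B) (c : B → ℕ → ℝ)
    (hconv : ∀ x : B,
      Tendsto (fun n => ∑ i ∈ Finset.range n, c x i • ξ i) atTop (𝓝 x))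
    (huniq : ∀ (x : B) (d : ℕ → ℝ),
      Tendsto (fun n => ∑ i ∈ Finset.range n, d i • ξ i) atTop (𝓝 x) → d = c x) :
    ∀ i : ℕ, ∃ φ : B →L[ℝ] ℝ, ∀ x : B, φ x = c x i := by
  intro i
  have : CompleteSpace (partialSumSpace ℝ ξ) := (isClosed_partialSumSpace ξ).completeSpace_coe
  obtain ⟨hinj, hsurj⟩ := limitCLM_bijective huniq hconv
  let e := ContinuousLinearEquiv.ofBijective (limitCLM ℝ ξ)
    (LinearMap.ker_eq_bot.2 hinj) (LinearMap.range_eq_top.2 hsurj)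
  refine ⟨incrementCoord (ne_zero_of_coeff_unique huniq i) ∘L e.symm, fun x => ?_⟩
  rw [ContinuousLinearMap.comp_apply, incrementCoord_apply huniq]
  exact congrArg (c · i) (e.apply_symm_apply x)
end

section
/- Let B be a real Banach space and ξ : ℕ → B a Schauder basis of B, with coefficient functionals cᵢ. Assume: (A1) for every x ∈ B and every n ∈ ℕ, ‖∑_{i<n} cᵢ(x) • ξ(i)‖ ≤ ‖x‖; (A2) for every sequence of scalars d : ℕ → ℝ and every b > 0, if ‖∑_{i<n} d(i) • ξ(i)‖ ≤ b for all n ∈ ℕ, then the partial sums ∑_{i<n} d(i) • ξ(i) converge in norm to some x ∈ B with ‖x‖ ≤ b; (A3) for every continuous linear functional f on B, ‖f − ∑_{i<n} f(ξ(i)) • cᵢ(·)‖ → 0 in the dual norm as n → ∞. Then B is reflexive: the canonical isometric embedding of B into its double dual B** is surjective. -/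
open Filter Topology

/-!
Given `F ∈ B**`, take the coefficients `d i = F (φ i)`. Pairing the partial sums `∑ d i • ξ i`
with a functional `f` gives `F` applied to the partial sums `∑ f (ξ i) • φ i` of the basis
expansion of `f`. By (A1) these dual partial sums have norm at most `‖f‖`, so the primal partial
sums have norm at most `‖F‖`, and (A2) makes them converge to some `x`. Then
`f x = lim F (∑ f (ξ i) • φ i) = F f` by (A3).
-/

namespace SchauderBasis

open Finset NormedSpace

variable {𝕜 E : Type*} [RCLike 𝕜] [NormedAddCommGroup E] [NormedSpace 𝕜 E]
  (ξ : ℕ → E) (φ : ℕ → StrongDual 𝕜 E)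

theorem apply_sum_smul_dual_eq (f : StrongDual 𝕜 E) (F : StrongDual 𝕜 (StrongDual 𝕜 E))
    (n : ℕ) :
    F (∑ i ∈ range n, f (ξ i) • φ i) = f (∑ i ∈ range n, F (φ i) • ξ i) := by
  simp only [map_sum, map_smul, smul_eq_mul, mul_comm]

variable {ξ φ}

theorem norm_sum_smul_dual_le (hP : ∀ (x : E) (n : ℕ), ‖∑ i ∈ range n, φ i x • ξ i‖ ≤ ‖x‖)
    (f : StrongDual 𝕜 E) (n : ℕ) : ‖∑ i ∈ range n, f (ξ i) • φ i‖ ≤ ‖f‖ := by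
  refine ContinuousLinearMap.opNorm_le_bound _ (norm_nonneg f) fun x => ?_
  have hfx : (∑ i ∈ range n, f (ξ i) • φ i) x = f (∑ i ∈ range n, φ i x • ξ i) := by
    simp only [_root_.sum_apply, smul_apply, smul_eq_mul, map_sum, map_smul, mul_comm]
  calc ‖(∑ i ∈ range n, f (ξ i) • φ i) x‖ = ‖f (∑ i ∈ range n, φ i x • ξ i)‖ := by rw [hfx]
    _ ≤ ‖f‖ * ‖∑ i ∈ range n, φ i x • ξ i‖ := f.le_opNorm _
    _ ≤ ‖f‖ * ‖x‖ := by gcongr; exact hP x n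

theorem norm_sum_bidual_apply_smul_le
    (hP : ∀ (x : E) (n : ℕ), ‖∑ i ∈ range n, φ i x • ξ i‖ ≤ ‖x‖)
    (F : StrongDual 𝕜 (StrongDual 𝕜 E)) (n : ℕ) : ‖∑ i ∈ range n, F (φ i) • ξ i‖ ≤ ‖F‖ := by
  refine norm_le_dual_bound 𝕜 _ (norm_nonneg F) fun f => ?_
  calc ‖f (∑ i ∈ range n, F (φ i) • ξ i)‖ = ‖F (∑ i ∈ range n, f (ξ i) • φ i)‖ := by
        rw [apply_sum_smul_dual_eq]
    _ ≤ ‖F‖ * ‖∑ i ∈ range n, f (ξ i) • φ i‖ := F.le_opNorm _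
    _ ≤ ‖F‖ * ‖f‖ := by gcongr; exact norm_sum_smul_dual_le hP f n

theorem inclusionInDoubleDual_eq_of_tendsto
    (hexp : ∀ f : StrongDual 𝕜 E,
      Tendsto (fun n => ∑ i ∈ range n, f (ξ i) • φ i) atTop (𝓝 f))
    {F : StrongDual 𝕜 (StrongDual 𝕜 E)} {x : E}
    (hx : Tendsto (fun n => ∑ i ∈ range n, F (φ i) • ξ i) atTop (𝓝 x)) :
    inclusionInDoubleDual 𝕜 E x = F := by
  ext f
  have hFf : Tendsto (fun n => f (∑ i ∈ range n, F (φ i) • ξ i)) atTop (𝓝 (F f)) :=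
    ((F.continuous.tendsto f).comp (hexp f)).congr (apply_sum_smul_dual_eq ξ φ f F)
  exact tendsto_nhds_unique ((f.continuous.tendsto x).comp hx) hFf

end SchauderBasis

open SchauderBasis in
theorem schauder_basis_reflexive_general
    {B : Type*} [NormedAddCommGroup B] [NormedSpace ℝ B] [CompleteSpace B]
    (ξ : ℕ → B) (c : B → ℕ → ℝ)
    (φ : ℕ → B →L[ℝ] ℝ) (hφ : ∀ (i : ℕ) (x : B), φ i x = c x i)
    (A1 : ∀ (x : B) (n : ℕ), ‖∑ i ∈ Finset.range n, c x i • ξ i‖ ≤ ‖x‖)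
    (A2 : ∀ (d : ℕ → ℝ) (b : ℝ), 0 < b →
      (∀ n : ℕ, ‖∑ i ∈ Finset.range n, d i • ξ i‖ ≤ b) →
      ∃ x : B, Tendsto (fun n => ∑ i ∈ Finset.range n, d i • ξ i) atTop (𝓝 x) ∧ ‖x‖ ≤ b)
    (A3 : ∀ f : B →L[ℝ] ℝ,
      Tendsto (fun n => ‖f - ∑ i ∈ Finset.range n, f (ξ i) • φ i‖) atTop (𝓝 0)) :
    Function.Surjective (NormedSpace.inclusionInDoubleDual ℝ B) := by
  intro F
  have hP : ∀ (x : B) (n : ℕ), ‖∑ i ∈ Finset.range n, φ i x • ξ i‖ ≤ ‖x‖ := by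
    simpa only [← hφ] using A1
  have hexp : ∀ f : B →L[ℝ] ℝ,
      Tendsto (fun n => ∑ i ∈ Finset.range n, f (ξ i) • φ i) atTop (𝓝 f) := fun f =>
    tendsto_iff_norm_sub_tendsto_zero.2 (by simpa only [norm_sub_rev] using A3 f)
  obtain ⟨x, hx, -⟩ := A2 (fun i => F (φ i)) (‖F‖ + 1) (by positivity) fun n =>
    (norm_sum_bidual_apply_smul_le hP F n).trans (le_add_of_nonneg_right zero_le_one)
  exact ⟨x, inclusionInDoubleDual_eq_of_tendsto hexp hx⟩

/-- **Rabin's theorem.** Let `ξ` be a Schauder basis of a real Banach space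
`B`, with (continuous) coefficient functionals `φ i x = c x i`. Under assumptions
(A1) monotone norm bound on partial sums, (A2) boundedly-supported coefficient sequences
give convergent series with the same norm bound, and (A3) every continuous functional is
the dual-norm limit of its finite basis expansions, the space `B` is reflexive: the
canonical embedding into the double dual is surjective. -/
theorem schauder_basis_reflexive
    {B : Type*} [NormedAddCommGroup B] [NormedSpace ℝ B] [CompleteSpace B]
    (ξ : ℕ → B) (c : B → ℕ → ℝ)
    (hconv : ∀ x : B,
      Tendsto (fun n => ∑ i ∈ Finset.range n, c x i • ξ i) atTop (𝓝 x))
    (huniq : ∀ (x : B) (d : ℕ → ℝ),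
      Tendsto (fun n => ∑ i ∈ Finset.range n, d i • ξ i) atTop (𝓝 x) → d = c x)
    (φ : ℕ → B →L[ℝ] ℝ) (hφ : ∀ (i : ℕ) (x : B), φ i x = c x i)
    (A1 : ∀ (x : B) (n : ℕ), ‖∑ i ∈ Finset.range n, c x i • ξ i‖ ≤ ‖x‖)
    (A2 : ∀ (d : ℕ → ℝ) (b : ℝ), 0 < b →
      (∀ n : ℕ, ‖∑ i ∈ Finset.range n, d i • ξ i‖ ≤ b) →
      ∃ x : B, Tendsto (fun n => ∑ i ∈ Finset.range n, d i • ξ i) atTop (𝓝 x) ∧ ‖x‖ ≤ b)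
    (A3 : ∀ f : B →L[ℝ] ℝ,
      Tendsto (fun n => ‖f - ∑ i ∈ Finset.range n, f (ξ i) • φ i‖) atTop (𝓝 0)) :
    Function.Surjective (NormedSpace.inclusionInDoubleDual ℝ B) :=
  schauder_basis_reflexive_general ξ c φ hφ A1 A2 A3
end

section
/- Let B be a real Banach space and ξ : ℕ → B a Schauder basis of B, with coefficient functionals cᵢ. Assume: (A1) for every x ∈ B and every n ∈ ℕ, ‖∑_{i<n} cᵢ(x) • ξ(i)‖ ≤ ‖x‖; (A2) for every sequence of scalars d : ℕ → ℝ and every b > 0, if ‖∑_{i<n} d(i) • ξ(i)‖ ≤ b for all n ∈ ℕ, then the partial sums ∑_{i<n} d(i) • ξ(i) converge in norm to some x ∈ B with ‖x‖ ≤ b; (A3) for every continuous linear functional f on B, ‖f − ∑_{i<n} f(ξ(i)) • cᵢ(·)‖ → 0 in the dual norm as n → ∞. Then the closed unit ball {x ∈ B : ‖x‖ ≤ 1} is compact in the weak topology of B (the topology induced by the continuous dual B*). -/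
open Filter Topology

/-!
Take an ultrafilter `U` containing the unit ball. Each coefficient functional is bounded on the
ball, so it converges along `U` to some `d i`. By (A1) the partial sums `∑_{i<n} d i • ξ i` are
limits of partial sums of points of the ball, hence have norm at most `1`, and (A2) provides a
point `x₀` of the ball whose coefficients are the `d i`. Finally (A3) approximates every
continuous functional, uniformly on the ball, by finite combinations of coefficient functionals,
along which `U` converges to `x₀`; so `U` converges weakly to `x₀`.
-/

section WeakTopology

variable {𝕜 E : Type*} [CommRing 𝕜] [TopologicalSpace 𝕜] [ContinuousAdd 𝕜]
  [ContinuousConstSMul 𝕜 𝕜] [AddCommGroup E] [Module 𝕜 E] [TopologicalSpace E]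
  [SeparatingDual 𝕜 E]

theorem tendsto_toWeakSpace_iff {α : Type*} {l : Filter α} {g : α → E} {x : E} :
    Tendsto (fun a => toWeakSpace 𝕜 E (g a)) l (𝓝 (toWeakSpace 𝕜 E x)) ↔
      ∀ f : StrongDual 𝕜 E, Tendsto (fun a => f (g a)) l (𝓝 (f x)) :=
  WeakBilin.tendsto_iff_forall_eval_tendsto _ fun _ _ h =>
    (SeparatingDual.eq_iff_forall_dual_eq (R := 𝕜)).mpr fun f => LinearMap.congr_fun h f

theorem isCompact_toWeakSpace_image_of_forall_ultrafilter {s : Set E}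
    (h : ∀ U : Ultrafilter E, s ∈ U →
      ∃ x ∈ s, ∀ f : StrongDual 𝕜 E, Tendsto f U (𝓝 (f x))) :
    IsCompact (toWeakSpace 𝕜 E '' s) := by
  rw [isCompact_iff_ultrafilter_le_nhds']
  intro 𝒰 h𝒰
  obtain ⟨x, hx, hlim⟩ := h (𝒰.map (toWeakSpace 𝕜 E).symm)
    (by rwa [Ultrafilter.mem_map, ← LinearEquiv.image_eq_preimage_symm])
  refine ⟨toWeakSpace 𝕜 E x, Set.mem_image_of_mem _ hx, ?_⟩
  have h := tendsto_toWeakSpace_iff.mpr fun f => tendsto_map'_iff.mp (hlim f)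
  simp only [LinearEquiv.apply_symm_apply] at h
  exact tendsto_id'.mp h

end WeakTopology

theorem Ultrafilter.exists_tendsto_of_eventually_norm_le {α E : Type*}
    [SeminormedAddCommGroup E] [ProperSpace E] (U : Ultrafilter α) {g : α → E} {C : ℝ}
    (hg : ∀ᶠ a in U, ‖g a‖ ≤ C) : ∃ y, Tendsto g U (𝓝 y) := by
  obtain ⟨y, -, hy⟩ := (isCompact_closedBall (0 : E) C).ultrafilter_le_nhds (U.map g)
    (le_principal_iff.mpr (hg.mono fun _ ha => mem_closedBall_zero_iff.mpr ha))
  exact ⟨y, hy⟩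

theorem ContinuousLinearMap.tendsto_apply_of_tendsto_of_forall_tendsto_apply
    {𝕜 E F ι α : Type*} [NontriviallyNormedField 𝕜] [SeminormedAddCommGroup E]
    [SeminormedAddCommGroup F] [NormedSpace 𝕜 E] [NormedSpace 𝕜 F]
    {p : Filter ι} [p.NeBot] {T : ι → E →L[𝕜] F} {S : E →L[𝕜] F} (hT : Tendsto T p (𝓝 S))
    {l : Filter α} {g : α → E} {x : E} {R : ℝ} (hg : ∀ᶠ a in l, ‖g a‖ ≤ R)
    (hTg : ∀ i, Tendsto (fun a => T i (g a)) l (𝓝 (T i x))) :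
    Tendsto (fun a => S (g a)) l (𝓝 (S x)) := by
  have hunif : TendstoUniformlyOnFilter (fun i a => T i (g a)) (fun a => S (g a)) p l := by
    rw [Metric.tendstoUniformlyOnFilter_iff]
    intro ε hε
    have hsmall : ∀ᶠ i in p, ‖S - T i‖ * R < ε := by
      have : Tendsto (fun i => ‖S - T i‖ * R) p (𝓝 (0 * R)) :=
        ((tendsto_iff_norm_sub_tendsto_zero.mp hT).congr fun i => norm_sub_rev _ _).mul_const R
      exact this.eventually (gt_mem_nhds (by simpa using hε))
    filter_upwards [hsmall.prod_mk hg] with ⟨i, a⟩ ⟨hi, ha⟩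
    calc dist (S (g a)) (T i (g a)) = ‖(S - T i) (g a)‖ := by
          rw [dist_eq_norm, sub_apply]
      _ ≤ ‖S - T i‖ * ‖g a‖ := (S - T i).le_opNorm (g a)
      _ ≤ ‖S - T i‖ * R := by gcongr
      _ < ε := hi
  exact hunif.tendsto_of_eventually_tendsto (Eventually.of_forall hTg)
    ((continuous_id.clm_apply continuous_const).tendsto S |>.comp hT)

section SchauderBasis

open Finset

variable {B : Type*} [NormedAddCommGroup B] [NormedSpace ℝ B] (ξ : ℕ → B) (φ : ℕ → StrongDual ℝ B)

theorem exists_tendsto_coord_of_eventually_norm_le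
    (huniq : ∀ (x : B) (d : ℕ → ℝ),
      Tendsto (fun n => ∑ i ∈ range n, d i • ξ i) atTop (𝓝 x) → d = fun i => φ i x)
    (hproj : ∀ (x : B) (n : ℕ), ‖∑ i ∈ range n, φ i x • ξ i‖ ≤ ‖x‖)
    (hbdd : ∀ (d : ℕ → ℝ) (b : ℝ), 0 < b →
      (∀ n : ℕ, ‖∑ i ∈ range n, d i • ξ i‖ ≤ b) →
      ∃ x : B, Tendsto (fun n => ∑ i ∈ range n, d i • ξ i) atTop (𝓝 x) ∧ ‖x‖ ≤ b)
    {r : ℝ} (hr : 0 < r) (U : Ultrafilter B) (hU : ∀ᶠ x in (U : Filter B), ‖x‖ ≤ r) :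
    ∃ x₀ : B, ‖x₀‖ ≤ r ∧ ∀ i, Tendsto (φ i) U (𝓝 (φ i x₀)) := by
  have hcoord_bdd : ∀ i, ∀ᶠ x in U, ‖φ i x‖ ≤ ‖φ i‖ * r := fun i =>
    hU.mono fun x hx => (φ i).le_of_opNorm_le_of_le le_rfl hx
  choose d hd using fun i => U.exists_tendsto_of_eventually_norm_le (hcoord_bdd i)
  have hsum_bdd : ∀ n, ‖∑ i ∈ range n, d i • ξ i‖ ≤ r := fun n =>
    le_of_tendsto (tendsto_finsetSum _ fun i _ => (hd i).smul_const (ξ i)).norm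
      (hU.mono fun x hx => (hproj x n).trans hx)
  obtain ⟨x₀, hx₀, hx₀r⟩ := hbdd d r hr hsum_bdd
  obtain rfl := huniq x₀ d hx₀
  exact ⟨x₀, hx₀r, hd⟩

theorem tendsto_apply_of_tendsto_coord {f : StrongDual ℝ B}
    (hf : Tendsto (fun n => ‖f - ∑ i ∈ range n, f (ξ i) • φ i‖) atTop (𝓝 0))
    {α : Type*} {l : Filter α} {g : α → B} {x₀ : B} {R : ℝ} (hg : ∀ᶠ a in l, ‖g a‖ ≤ R)
    (hcoord : ∀ i, Tendsto (fun a => φ i (g a)) l (𝓝 (φ i x₀))) :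
    Tendsto (fun a => f (g a)) l (𝓝 (f x₀)) := by
  refine ContinuousLinearMap.tendsto_apply_of_tendsto_of_forall_tendsto_apply
    (p := atTop) (T := fun n => ∑ i ∈ range n, f (ξ i) • φ i)
    (tendsto_iff_norm_sub_tendsto_zero.mpr ?_) hg fun n => ?_
  · simpa only [norm_sub_rev] using hf
  · simpa using tendsto_finsetSum _ fun i _ => (hcoord i).const_mul (f (ξ i))

end SchauderBasis

theorem schauder_basis_unit_ball_weakly_compact_general
    {B : Type*} [NormedAddCommGroup B] [NormedSpace ℝ B]
    (ξ : ℕ → B) (c : B → ℕ → ℝ)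
    (huniq : ∀ (x : B) (d : ℕ → ℝ),
      Tendsto (fun n => ∑ i ∈ Finset.range n, d i • ξ i) atTop (𝓝 x) → d = c x)
    (φ : ℕ → B →L[ℝ] ℝ) (hφ : ∀ (i : ℕ) (x : B), φ i x = c x i)
    (A1 : ∀ (x : B) (n : ℕ), ‖∑ i ∈ Finset.range n, c x i • ξ i‖ ≤ ‖x‖)
    (A2 : ∀ (d : ℕ → ℝ) (b : ℝ), 0 < b →
      (∀ n : ℕ, ‖∑ i ∈ Finset.range n, d i • ξ i‖ ≤ b) →
      ∃ x : B, Tendsto (fun n => ∑ i ∈ Finset.range n, d i • ξ i) atTop (𝓝 x) ∧ ‖x‖ ≤ b)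
    (A3 : ∀ f : B →L[ℝ] ℝ,
      Tendsto (fun n => ‖f - ∑ i ∈ Finset.range n, f (ξ i) • φ i‖) atTop (𝓝 0)) :
    IsCompact (toWeakSpace ℝ B '' Metric.closedBall (0 : B) 1) := by
  obtain rfl : c = fun x i => φ i x := funext₂ fun x i => (hφ i x).symm
  refine isCompact_toWeakSpace_image_of_forall_ultrafilter fun U hU => ?_
  have hU_norm : ∀ᶠ x in (U : Filter B), ‖x‖ ≤ 1 :=
    mem_of_superset hU fun _ => mem_closedBall_zero_iff.mp
  obtain ⟨x₀, hx₀, hcoord⟩ :=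
    exists_tendsto_coord_of_eventually_norm_le ξ φ huniq A1 A2 one_pos U hU_norm
  exact ⟨x₀, mem_closedBall_zero_iff.mpr hx₀,
    fun f => tendsto_apply_of_tendsto_coord ξ φ (A3 f) hU_norm hcoord⟩

/-- Under the same assumptions (A1)–(A3) as Rabin's theorem, the closed
unit ball of `B` is compact in the weak topology of `B`. -/
theorem schauder_basis_unit_ball_weakly_compact
    {B : Type*} [NormedAddCommGroup B] [NormedSpace ℝ B] [CompleteSpace B]
    (ξ : ℕ → B) (c : B → ℕ → ℝ)
    (hconv : ∀ x : B,
      Tendsto (fun n => ∑ i ∈ Finset.range n, c x i • ξ i) atTop (𝓝 x))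
    (huniq : ∀ (x : B) (d : ℕ → ℝ),
      Tendsto (fun n => ∑ i ∈ Finset.range n, d i • ξ i) atTop (𝓝 x) → d = c x)
    (φ : ℕ → B →L[ℝ] ℝ) (hφ : ∀ (i : ℕ) (x : B), φ i x = c x i)
    (A1 : ∀ (x : B) (n : ℕ), ‖∑ i ∈ Finset.range n, c x i • ξ i‖ ≤ ‖x‖)
    (A2 : ∀ (d : ℕ → ℝ) (b : ℝ), 0 < b →
      (∀ n : ℕ, ‖∑ i ∈ Finset.range n, d i • ξ i‖ ≤ b) →
      ∃ x : B, Tendsto (fun n => ∑ i ∈ Finset.range n, d i • ξ i) atTop (𝓝 x) ∧ ‖x‖ ≤ b)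
    (A3 : ∀ f : B →L[ℝ] ℝ,
      Tendsto (fun n => ‖f - ∑ i ∈ Finset.range n, f (ξ i) • φ i‖) atTop (𝓝 0)) :
    IsCompact (toWeakSpace ℝ B '' Metric.closedBall (0 : B) 1) :=
  schauder_basis_unit_ball_weakly_compact_general ξ c huniq φ hφ A1 A2 A3
end

section
/- Let B be a real Banach space and ξ : ℕ → B a Schauder basis of B, with coefficient functionals cᵢ. Assume each coefficient functional x ↦ cᵢ(x) is a continuous linear functional of dual norm at most K(i) for some K : ℕ → ℝ, and assume: (A1) for every x ∈ B and every n ∈ ℕ, ‖∑_{i<n} cᵢ(x) • ξ(i)‖ ≤ ‖x‖; (A2) for every sequence of scalars d : ℕ → ℝ and every b > 0, if ‖∑_{i<n} d(i) • ξ(i)‖ ≤ b for all n ∈ ℕ, then the partial sums ∑_{i<n} d(i) • ξ(i) converge in norm to some x ∈ B with ‖x‖ ≤ b. Then the set C = {d : ℕ → ℝ | there exists x ∈ B with ‖x‖ ≤ 1 and d(i) = cᵢ(x) for all i} is a compact subset of ℕ → ℝ equipped with the product topology. -/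
open Filter Topology

/-- Under continuity of the coefficient functionals (with dual norms
bounded by `K i`) and assumptions (A1) and (A2), the set of coefficient sequences of
elements of the closed unit ball of `B` is compact in the product topology on `ℕ → ℝ`. -/
theorem schauder_coeff_set_compact_in_product_topology
    {B : Type*} [NormedAddCommGroup B] [NormedSpace ℝ B] [CompleteSpace B]
    (ξ : ℕ → B) (c : B → ℕ → ℝ)
    (hconv : ∀ x : B,
      Tendsto (fun n => ∑ i ∈ Finset.range n, c x i • ξ i) atTop (𝓝 x))
    (huniq : ∀ (x : B) (d : ℕ → ℝ),
      Tendsto (fun n => ∑ i ∈ Finset.range n, d i • ξ i) atTop (𝓝 x) → d = c x)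
    (φ : ℕ → B →L[ℝ] ℝ) (hφ : ∀ (i : ℕ) (x : B), φ i x = c x i)
    (K : ℕ → ℝ) (hK : ∀ i : ℕ, ‖φ i‖ ≤ K i)
    (A1 : ∀ (x : B) (n : ℕ), ‖∑ i ∈ Finset.range n, c x i • ξ i‖ ≤ ‖x‖)
    (A2 : ∀ (d : ℕ → ℝ) (b : ℝ), 0 < b →
      (∀ n : ℕ, ‖∑ i ∈ Finset.range n, d i • ξ i‖ ≤ b) →
      ∃ x : B, Tendsto (fun n => ∑ i ∈ Finset.range n, d i • ξ i) atTop (𝓝 x) ∧ ‖x‖ ≤ b) :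
    IsCompact {d : ℕ → ℝ | ∃ x : B, ‖x‖ ≤ 1 ∧ ∀ i : ℕ, d i = c x i} := by
  -- The set equals {d | ∀ n, ‖partial sum‖ ≤ 1}
  have hset : {d : ℕ → ℝ | ∃ x : B, ‖x‖ ≤ 1 ∧ ∀ i : ℕ, d i = c x i}
      = {d : ℕ → ℝ | ∀ n : ℕ, ‖∑ i ∈ Finset.range n, d i • ξ i‖ ≤ 1} := by
    ext d
    constructor
    · rintro ⟨x, hx, hd⟩ n
      have : (∑ i ∈ Finset.range n, d i • ξ i) = ∑ i ∈ Finset.range n, c x i • ξ i := by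
        refine Finset.sum_congr rfl fun i _ => by rw [hd i]
      rw [this]
      exact (A1 x n).trans hx
    · intro hd
      obtain ⟨x, hxt, hxn⟩ := A2 d 1 one_pos hd
      exact ⟨x, hxn, fun i => by rw [huniq x d hxt]⟩
  rw [hset]
  -- contained in a compact product of intervals
  apply IsCompact.of_isClosed_subset
    (isCompact_univ_pi (fun i => isCompact_Icc (a := -(K i)) (b := K i)))
  · -- closedness
    have : {d : ℕ → ℝ | ∀ n : ℕ, ‖∑ i ∈ Finset.range n, d i • ξ i‖ ≤ 1}
        = ⋂ n : ℕ, (fun d : ℕ → ℝ => ‖∑ i ∈ Finset.range n, d i • ξ i‖) ⁻¹' Set.Iic 1 := by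
      ext d; simp [Set.mem_iInter]
    rw [this]
    refine isClosed_iInter fun n => IsClosed.preimage ?_ isClosed_Iic
    exact (continuous_finset_sum _ fun i _ => (continuous_apply i).smul continuous_const).norm
  · -- subset
    intro d hd
    -- go back: d comes from some x with ‖x‖ ≤ 1
    obtain ⟨x, hxt, hxn⟩ := A2 d 1 one_pos hd
    have hdc : d = c x := huniq x d hxt
    intro i _
    have hb : |c x i| ≤ K i := by
      have := (φ i).le_opNorm x
      rw [hφ i x] at this
      calc |c x i| = ‖c x i‖ := rfl
        _ ≤ ‖φ i‖ * ‖x‖ := this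
        _ ≤ K i * 1 := by
            exact mul_le_mul (hK i) hxn (norm_nonneg x) ((norm_nonneg _).trans (hK i))
        _ = K i := mul_one _
    rw [hdc]
    exact abs_le.mp hb
end

section
/- Let B be a real Banach space and ξ : ℕ → B a Schauder basis of B, with coefficient functionals cᵢ, each of which is a continuous linear functional. Assume: (A3) for every continuous linear functional f on B, ‖f − ∑_{i<n} f(ξ(i)) • cᵢ(·)‖ → 0 in the dual norm as n → ∞. Then the map x ↦ (cᵢ(x))_{i∈ℕ}, restricted to the closed unit ball {x ∈ B : ‖x‖ ≤ 1} equipped with the subspace topology from the weak topology of B, is a topological embedding into ℕ → ℝ with the product topology; in particular, on the closed unit ball the weak topology coincides with the topology of pointwise convergence of the basis coefficients. -/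
open Filter Topology Set Bornology

/-!
On a bounded set, a norm limit of functionals is a uniform limit, so the functionals whose
restriction is continuous for the coordinate topology form a closed subspace of the dual. It
contains every coefficient functional, and by (A3) their span is dense in the dual; hence every
functional is continuous for the coordinate topology on the ball, which is therefore finer than
the weak topology. The weak topology is Hausdorff, so the coordinate map is also injective.
-/

section
variable {𝕜 E ι : Type*} [NontriviallyNormedField 𝕜] [NormedAddCommGroup E] [NormedSpace 𝕜 E]

theorem topologicalClosure_span_eq_top_of_tendsto {φ : ℕ → StrongDual 𝕜 E} (ξ : ℕ → E)
    (h : ∀ f : StrongDual 𝕜 E,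
      Tendsto (fun n => ‖f - ∑ i ∈ Finset.range n, f (ξ i) • φ i‖) atTop (𝓝 0)) :
    (Submodule.span 𝕜 (range φ)).topologicalClosure = ⊤ := by
  refine eq_top_iff.mpr fun f _ => mem_closure_of_tendsto (b := atTop)
    (f := fun n => ∑ i ∈ Finset.range n, f (ξ i) • φ i)
    (tendsto_iff_norm_sub_tendsto_zero.mpr ?_) (Eventually.of_forall fun n => ?_)
  · simpa only [norm_sub_rev] using h f
  · exact Submodule.sum_mem _ fun i _ =>
      Submodule.smul_mem _ _ (Submodule.subset_span (mem_range_self i))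

def compContinuousDual {X : Type*} [TopologicalSpace X] (p : X → E) :
    Submodule 𝕜 (StrongDual 𝕜 E) where
  carrier := {f | Continuous fun x => f (p x)}
  zero_mem' := continuous_const
  add_mem' hf hg := hf.add hg
  smul_mem' a _ hf := hf.const_smul a

theorem isClosed_compContinuousDual {X : Type*} [TopologicalSpace X] {p : X → E}
    (hp : IsBounded (range p)) :
    IsClosed (compContinuousDual (𝕜 := 𝕜) p : Set (StrongDual 𝕜 E)) := by
  obtain ⟨R, hR⟩ := hp.exists_norm_le
  refine isClosed_of_closure_subset fun f hf => ?_
  refine continuous_of_uniform_approx_of_continuous fun u hu => ?_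
  obtain ⟨ε, hε, hεu⟩ := Metric.mem_uniformity_dist.mp hu
  obtain ⟨g, hg, hfg⟩ := Metric.mem_closure_iff.mp hf (ε / (|R| + 1)) (by positivity)
  refine ⟨fun x => g (p x), hg, fun x => hεu ?_⟩
  calc dist (f (p x)) (g (p x)) = ‖(f - g) (p x)‖ := by rw [dist_eq_norm, sub_apply]
    _ ≤ ‖f - g‖ * |R| :=
      (f - g).le_opNorm_of_le ((hR _ (mem_range_self x)).trans (le_abs_self R))
    _ ≤ ε / (|R| + 1) * |R| := by gcongr; rw [← dist_eq_norm]; exact hfg.le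
    _ < ε := by
      rw [div_mul_eq_mul_div, div_lt_iff₀ (by positivity)]
      nlinarith [abs_nonneg R]

theorem continuous_comp_of_mem_topologicalClosure_span {X : Type*} [TopologicalSpace X]
    {φ : ι → StrongDual 𝕜 E} {p : X → E} (hp : IsBounded (range p))
    (hφp : ∀ i, Continuous fun x => φ i (p x)) {f : StrongDual 𝕜 E}
    (hf : f ∈ (Submodule.span 𝕜 (range φ)).topologicalClosure) :
    Continuous fun x => f (p x) := by
  have hspan : Submodule.span 𝕜 (range φ) ≤ compContinuousDual p :=
    Submodule.span_le.mpr <| range_subset_iff.mpr hφp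
  exact Submodule.topologicalClosure_minimal _ hspan (isClosed_compContinuousDual hp) hf

end

theorem isEmbedding_pi_apply_of_topologicalClosure_span_eq_top {𝕜 E ι : Type*} [RCLike 𝕜]
    [NormedAddCommGroup E] [NormedSpace 𝕜 E] {φ : ι → StrongDual 𝕜 E}
    (hφ : (Submodule.span 𝕜 (range φ)).topologicalClosure = ⊤) {S : Set E} (hS : IsBounded S) :
    IsEmbedding fun x : toWeakSpace 𝕜 E '' S => fun i => φ i ((toWeakSpace 𝕜 E).symm x) := by
  set F := fun x : toWeakSpace 𝕜 E '' S => fun i => φ i ((toWeakSpace 𝕜 E).symm x)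
  have hF : Continuous F := continuous_pi fun i =>
    (WeakBilin.eval_continuous (topDualPairing 𝕜 E).flip (φ i)).comp continuous_subtype_val
  refine IsInducing.isEmbedding ⟨le_antisymm hF.le_induced ?_⟩
  let τ := TopologicalSpace.induced F inferInstance
  have hp : IsBounded (range fun x : toWeakSpace 𝕜 E '' S => (toWeakSpace 𝕜 E).symm x) := by
    refine hS.subset (range_subset_iff.mpr ?_)
    rintro ⟨_, y, hy, rfl⟩
    exact hy
  have hφp (i : ι) : Continuous[τ, _] fun x => φ i ((toWeakSpace 𝕜 E).symm x) :=
    (continuous_apply i).comp (continuous_induced_dom (f := F))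
  have hval : Continuous[τ, _] fun x : toWeakSpace 𝕜 E '' S => (x : WeakSpace 𝕜 E) := by
    let _ := τ
    exact WeakBilin.continuous_of_continuous_eval _ fun f =>
      continuous_comp_of_mem_topologicalClosure_span hp hφp (hφ ▸ Submodule.mem_top)
  exact continuous_iff_le_induced.mp hval

theorem schauder_weak_topology_eq_product_on_ball_general
    {B : Type*} [NormedAddCommGroup B] [NormedSpace ℝ B]
    (ξ : ℕ → B) (c : B → ℕ → ℝ)
    (φ : ℕ → B →L[ℝ] ℝ) (hφ : ∀ (i : ℕ) (x : B), φ i x = c x i)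
    (A3 : ∀ f : B →L[ℝ] ℝ,
      Tendsto (fun n => ‖f - ∑ i ∈ Finset.range n, f (ξ i) • φ i‖) atTop (𝓝 0)) :
    IsEmbedding (fun x : (toWeakSpace ℝ B '' Metric.closedBall (0 : B) 1) =>
      fun i : ℕ => c ((toWeakSpace ℝ B).symm x.1) i) := by
  simp only [← hφ]
  exact isEmbedding_pi_apply_of_topologicalClosure_span_eq_top
    (topologicalClosure_span_eq_top_of_tendsto (𝕜 := ℝ) ξ A3) Metric.isBounded_closedBall

/-- Under continuity of the coefficient functionals and assumption (A3),
the coefficient map, restricted to the closed unit ball with the subspace topology coming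
from the weak topology of `B`, is a topological embedding into `ℕ → ℝ` with the product
topology: on the unit ball the weak topology coincides with pointwise convergence of the
basis coefficients. -/
theorem schauder_weak_topology_eq_product_on_ball
    {B : Type*} [NormedAddCommGroup B] [NormedSpace ℝ B] [CompleteSpace B]
    (ξ : ℕ → B) (c : B → ℕ → ℝ)
    (hconv : ∀ x : B,
      Tendsto (fun n => ∑ i ∈ Finset.range n, c x i • ξ i) atTop (𝓝 x))
    (huniq : ∀ (x : B) (d : ℕ → ℝ),
      Tendsto (fun n => ∑ i ∈ Finset.range n, d i • ξ i) atTop (𝓝 x) → d = c x)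
    (φ : ℕ → B →L[ℝ] ℝ) (hφ : ∀ (i : ℕ) (x : B), φ i x = c x i)
    (A3 : ∀ f : B →L[ℝ] ℝ,
      Tendsto (fun n => ‖f - ∑ i ∈ Finset.range n, f (ξ i) • φ i‖) atTop (𝓝 0)) :
    IsEmbedding (fun x : (toWeakSpace ℝ B '' Metric.closedBall (0 : B) 1) =>
      fun i : ℕ => c ((toWeakSpace ℝ B).symm x.1) i) :=
  schauder_weak_topology_eq_product_on_ball_general ξ c φ hφ A3
end
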